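/- Let G be a cubic graph and let V1 and V2 be disjoint sets of vertices of G. For i ∈ {1,2} and a set S ⊆ Vi, let H_i(S) denote the graph whose vertices are Vi∖S together with one new pendant vertex for each edge of G having exactly one endpoint in Vi∖S, whose edges are all edges of G with both endpoints in Vi∖S together with, for each edge of G with exactly one endpoint z in Vi∖S, a pendant edge joining z to the corresponding new vertex. Let r1, r2 be positive integers and suppose that for each i ∈ {1,2} and each S ⊆ Vi with |S| ≤ r_i − 1 the graph H_i(S) admits no proper 3-edge-colouring. Then ρ(G) ≥ r1 + r2, i.e., for every set S of at most r1 + r2 − 1 vertices of G, the graph G − S admits no proper 3-edge-colouring. -/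

import Mathlib

/-- A proper 3-edge-colouring of a simple graph. -/
def IsProper3EdgeColoring {V : Type*} (G : SimpleGraph V) (c : Sym2 V → Fin 3) : Prop :=
  ∀ e₁ e₂ : Sym2 V, e₁ ∈ G.edgeSet → e₂ ∈ G.edgeSet → e₁ ≠ e₂ →
    (∃ v, v ∈ e₁ ∧ v ∈ e₂) → c e₁ ≠ c e₂

/-- A graph admits a proper 3-edge-colouring. -/
def ThreeEdgeColorable {V : Type*} (G : SimpleGraph V) : Prop :=
  ∃ c : Sym2 V → Fin 3, IsProper3EdgeColoring G c

/-- A cubic graph: every vertex has exactly 3 neighbours. -/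
def IsCubic {V : Type*} (G : SimpleGraph V) : Prop :=
  ∀ v : V, Nat.card (G.neighborSet v) = 3

/-- The multipole induced by `G` on the vertex set `W`: its vertices are those of `W`
together with one new pendant vertex for each edge of `G` having exactly one endpoint
in `W`; each such pendant vertex is joined to the endpoint in `W` of the
corresponding edge. -/
def poleOf {V : Type*} (G : SimpleGraph V) (W : Set V) :
    SimpleGraph (↥W ⊕ {e : Sym2 V // e ∈ G.edgeSet ∧ ∃ a b : V, e = s(a, b) ∧ a ∈ W ∧ b ∉ W}) :=
  SimpleGraph.fromRel (fun p q =>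
    match p, q with
    | Sum.inl x, Sum.inl y => G.Adj x.1 y.1
    | Sum.inl x, Sum.inr e => x.1 ∈ e.1
    | _, _ => False)

lemma extend_inj {α : Type*} (T : Set α) (hT : T.Finite) (hcard : T.ncard ≤ 3)
    (s : Set α) (hs : s ⊆ T) (f : α → Fin 3) (hf : Set.InjOn f s) :
    ∃ g : α → Fin 3, Set.InjOn g T ∧ ∀ b ∈ s, g b = f b := by
  classical
  set u : Set (Fin 3) := (f '' s)ᶜ with hu
  have himg : (f '' s).ncard = s.ncard := Set.ncard_image_of_injOn hf
  have hucard : (T \ s).ncard ≤ u.ncard := by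
    have h1 : s.ncard + (T \ s).ncard = T.ncard := by
      rw [add_comm]; exact Set.ncard_diff_add_ncard_of_subset hs hT
    have h2 : (f '' s).ncard + u.ncard = 3 := by
      have := Set.ncard_add_ncard_compl (f '' s)
      simpa [Nat.card_eq_fintype_card] using this
    omega
  haveI : Fintype ↥(T \ s) := (hT.diff : (T \ s).Finite).fintype
  haveI : Fintype ↥u := Set.Finite.fintype u.toFinite
  have hcard' : Fintype.card ↥(T \ s) ≤ Fintype.card ↥u := by
    rwa [← Nat.card_coe_set_eq, ← Nat.card_coe_set_eq,
      Nat.card_eq_fintype_card, Nat.card_eq_fintype_card] at hucard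
  obtain ⟨j⟩ := Function.Embedding.nonempty_of_card_le hcard'
  refine ⟨fun b => if hb : b ∈ s then f b else if hb' : b ∈ T \ s then (j ⟨b, hb'⟩ : Fin 3) else 0,
    ?_, fun b hb => by simp [hb]⟩
  intro b₁ hb₁ b₂ hb₂ heq
  by_cases h₁ : b₁ ∈ s <;> by_cases h₂ : b₂ ∈ s
  · simpa [h₁, h₂] using hf h₁ h₂ (by simpa [h₁, h₂] using heq)
  · exfalso
    have hd : b₂ ∈ T \ s := ⟨hb₂, h₂⟩
    have : (j ⟨b₂, hd⟩ : Fin 3) ∈ u := (j ⟨b₂, hd⟩).2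
    simp only [h₁, h₂, dif_pos, dif_neg, not_false_iff, hd] at heq
    exact this (by rw [← heq]; exact ⟨b₁, h₁, rfl⟩)
  · exfalso
    have hd : b₁ ∈ T \ s := ⟨hb₁, h₁⟩
    have : (j ⟨b₁, hd⟩ : Fin 3) ∈ u := (j ⟨b₁, hd⟩).2
    simp only [h₁, h₂, dif_pos, dif_neg, not_false_iff, hd] at heq
    exact this (by rw [heq]; exact ⟨b₂, h₂, rfl⟩)
  · have hd₁ : b₁ ∈ T \ s := ⟨hb₁, h₁⟩
    have hd₂ : b₂ ∈ T \ s := ⟨hb₂, h₂⟩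
    simp only [h₁, h₂, dif_pos, dif_neg, not_false_iff, hd₁, hd₂] at heq
    have := j.injective (Subtype.ext heq)
    exact congrArg Subtype.val this

lemma pole_colorable {V : Type*} [Fintype V] (G : SimpleGraph V) (hG : IsCubic G)
    (S W : Set V) (hWS : W ⊆ Sᶜ)
    (hcol : ThreeEdgeColorable (G.induce Sᶜ)) : ThreeEdgeColorable (poleOf G W) := by
  classical
  obtain ⟨c, hc⟩ := hcol
  let ι : ↥W → ↥(Sᶜ) := fun x => ⟨x.1, hWS x.2⟩
  let cc : ↥W → V → Fin 3 := fun x b => if hb : b ∈ Sᶜ then c s(ι x, ⟨b, hb⟩) else 0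
  -- edges of the induced graph
  have hedge : ∀ (a b : ↥(Sᶜ)), G.Adj a.1 b.1 → s(a, b) ∈ (G.induce Sᶜ).edgeSet := by
    intro a b h
    rw [SimpleGraph.mem_edgeSet]
    exact h
  have hcxy : ∀ (x : ↥W) (b₁ b₂ : ↥(Sᶜ)), G.Adj x.1 b₁.1 → G.Adj x.1 b₂.1 → b₁ ≠ b₂ →
      c s(ι x, b₁) ≠ c s(ι x, b₂) := by
    intro x b₁ b₂ h₁ h₂ hne
    refine hc _ _ (hedge _ _ h₁) (hedge _ _ h₂) ?_ ⟨ι x, by simp, by simp⟩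
    intro h
    exact hne (Sym2.congr_right.mp h)
  have hg : ∀ x : ↥W, ∃ g : V → Fin 3, Set.InjOn g (G.neighborSet x.1) ∧
      ∀ b ∈ G.neighborSet x.1, b ∉ S → g b = cc x b := by
    intro x
    refine extend_inj (G.neighborSet x.1) (Set.toFinite _)
      (le_of_eq (by rw [← Nat.card_coe_set_eq]; exact hG x.1))
      (G.neighborSet x.1 ∩ Sᶜ) Set.inter_subset_left (cc x) ?_ |>.imp ?_
    · intro b₁ hb₁ b₂ hb₂ heq
      by_contra hne
      have h1 : cc x b₁ = c s(ι x, ⟨b₁, hb₁.2⟩) := dif_pos hb₁.2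
      have h2 : cc x b₂ = c s(ι x, ⟨b₂, hb₂.2⟩) := dif_pos hb₂.2
      exact hcxy x ⟨b₁, hb₁.2⟩ ⟨b₂, hb₂.2⟩ hb₁.1 hb₂.1
        (fun h => hne (congrArg Subtype.val h)) (by rw [← h1, ← h2, heq])
    · intro g hg
      exact ⟨hg.1, fun b hb hbs => hg.2 b ⟨hb, hbs⟩⟩
  choose gg hgg1 hgg2 using hg
  have hggc : ∀ (x y : ↥W), G.Adj x.1 y.1 → gg x y.1 = c s(ι x, ι y) := by
    intro x y h
    rw [hgg2 x y.1 h (hWS y.2)]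
    exact dif_pos (hWS y.2)
  -- pendant vertices
  set PV := {e : Sym2 V // e ∈ G.edgeSet ∧ ∃ a b : V, e = s(a, b) ∧ a ∈ W ∧ b ∉ W} with hPV
  have hAB : ∀ e : PV, ∃ a b : V, e.1 = s(a, b) ∧ a ∈ W ∧ b ∉ W := fun e => e.2.2
  choose A B hABe hAW hBW using hAB
  have hAdj : ∀ e : PV, G.Adj (A e) (B e) := by
    intro e
    have := e.2.1
    rw [hABe e] at this
    exact this
  have huniq : ∀ (e : PV) (x : ↥W), x.1 ∈ e.1 → x.1 = A e := by
    intro e x hx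
    rw [hABe e, Sym2.mem_iff] at hx
    rcases hx with h | h
    · exact h
    · exact absurd (h ▸ x.2) (hBW e)
  -- the colouring
  let F : (↥W ⊕ PV) → (↥W ⊕ PV) → Fin 3 := fun p q =>
    match p, q with
    | Sum.inl x, Sum.inl y => c s(ι x, ι y)
    | Sum.inl _, Sum.inr e => gg ⟨A e, hAW e⟩ (B e)
    | Sum.inr e, Sum.inl _ => gg ⟨A e, hAW e⟩ (B e)
    | Sum.inr _, Sum.inr _ => 0
  have hFsym : ∀ p q, F p q = F q p := by
    rintro (x | e) (y | e') <;> try rfl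
    exact congrArg c (Sym2.eq_swap)
  refine ⟨Sym2.lift ⟨F, hFsym⟩, ?_⟩
  -- adjacency characterisation
  have adj_inl : ∀ (x : ↥W) q, (poleOf G W).Adj (Sum.inl x) q →
      (∃ y : ↥W, q = Sum.inl y ∧ G.Adj x.1 y.1) ∨ (∃ e : PV, q = Sum.inr e ∧ x.1 ∈ e.1) := by
    intro x q hq
    rw [poleOf, SimpleGraph.fromRel_adj] at hq
    obtain ⟨-, h | h⟩ := hq <;> rcases q with y | e
    · exact Or.inl ⟨y, rfl, h⟩
    · exact Or.inr ⟨e, rfl, h⟩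
    · exact Or.inl ⟨y, rfl, h.symm⟩
    · exact h.elim
  have adj_inr : ∀ (e : PV) q, (poleOf G W).Adj (Sum.inr e) q →
      ∃ x : ↥W, q = Sum.inl x ∧ x.1 ∈ e.1 := by
    intro e q hq
    rw [poleOf, SimpleGraph.fromRel_adj] at hq
    rcases q with x | e'
    · obtain ⟨-, h | h⟩ := hq
      · exact h.elim
      · exact ⟨x, rfl, h⟩
    · obtain ⟨-, h | h⟩ := hq
      · exact h.elim
      · exact h.elim
  -- key facts about pendant edges at a vertex x
  have key : ∀ (x : ↥W) (e : PV), x.1 ∈ e.1 →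
      gg ⟨A e, hAW e⟩ (B e) = gg x (B e) ∧ B e ∈ G.neighborSet x.1 := by
    intro x e hx
    have hxa := huniq e x hx
    have hx' : (⟨A e, hAW e⟩ : ↥W) = x := Subtype.ext hxa.symm
    constructor
    · rw [hx']
    · have := hAdj e
      rw [← hxa] at this
      exact this
  -- properness
  intro e₁ e₂ h₁ h₂ hne ⟨v, hv₁, hv₂⟩
  obtain ⟨w₁, hs₁⟩ : ∃ w, s(v, w) = e₁ := ⟨Sym2.Mem.other hv₁, Sym2.other_spec hv₁⟩
  obtain ⟨w₂, hs₂⟩ : ∃ w, s(v, w) = e₂ := ⟨Sym2.Mem.other hv₂, Sym2.other_spec hv₂⟩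
  have hadj₁ : (poleOf G W).Adj v w₁ := by rw [← SimpleGraph.mem_edgeSet, hs₁]; exact h₁
  have hadj₂ : (poleOf G W).Adj v w₂ := by rw [← SimpleGraph.mem_edgeSet, hs₂]; exact h₂
  have hww : w₁ ≠ w₂ := by
    intro h
    exact hne (by rw [← hs₁, ← hs₂, h])
  rw [← hs₁, ← hs₂, Sym2.lift_mk, Sym2.lift_mk]
  rcases v with x | e
  · -- v is a real vertex
    rcases adj_inl x w₁ hadj₁ with ⟨y₁, hq₁, hxy₁⟩ | ⟨f₁, hq₁, hxf₁⟩ <;>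
      rcases adj_inl x w₂ hadj₂ with ⟨y₂, hq₂, hxy₂⟩ | ⟨f₂, hq₂, hxf₂⟩ <;>
      subst hq₁ <;> subst hq₂
    · -- both real
      show c s(ι x, ι y₁) ≠ c s(ι x, ι y₂)
      refine hcxy x (ι y₁) (ι y₂) hxy₁ hxy₂ ?_
      intro h
      have hv : y₁.1 = y₂.1 := congrArg (fun z : ↥(Sᶜ) => z.1) h
      have : y₁ = y₂ := Subtype.ext hv
      exact hww (by rw [this])
    · -- real, pendant
      show c s(ι x, ι y₁) ≠ gg ⟨A f₂, hAW f₂⟩ (B f₂)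
      obtain ⟨hk1, hk2⟩ := key x f₂ hxf₂
      rw [hk1, ← hggc x y₁ hxy₁]
      intro h
      have hy : y₁.1 ∈ G.neighborSet x.1 := hxy₁
      have := hgg1 x hy hk2 h
      exact hBW f₂ (this ▸ y₁.2)
    · -- pendant, real
      show gg ⟨A f₁, hAW f₁⟩ (B f₁) ≠ c s(ι x, ι y₂)
      obtain ⟨hk1, hk2⟩ := key x f₁ hxf₁
      rw [hk1, ← hggc x y₂ hxy₂]
      intro h
      have hy : y₂.1 ∈ G.neighborSet x.1 := hxy₂
      have := hgg1 x hk2 hy h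
      exact hBW f₁ (this.symm ▸ y₂.2)
    · -- both pendant
      show gg ⟨A f₁, hAW f₁⟩ (B f₁) ≠ gg ⟨A f₂, hAW f₂⟩ (B f₂)
      obtain ⟨hk1, hk2⟩ := key x f₁ hxf₁
      obtain ⟨hl1, hl2⟩ := key x f₂ hxf₂
      rw [hk1, hl1]
      intro h
      have hBB := hgg1 x hk2 hl2 h
      have hf : f₁ = f₂ := by
        apply Subtype.ext
        rw [hABe f₁, hABe f₂, ← huniq f₁ x hxf₁, ← huniq f₂ x hxf₂, hBB]
      exact hww (by rw [hf])
  · -- v is a pendant vertex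
    obtain ⟨x₁, hq₁, hx₁⟩ := adj_inr e w₁ hadj₁
    obtain ⟨x₂, hq₂, hx₂⟩ := adj_inr e w₂ hadj₂
    exfalso
    apply hww
    rw [hq₁, hq₂]
    congr 1
    exact Subtype.ext ((huniq e x₁ hx₁).trans (huniq e x₂ hx₂).symm)

/-- Vertex-disjoint uncolourable multipoles contribute additively to resistance:
if for `i = 1, 2` the multipole obtained from `Vi` after removing any at most
`rᵢ - 1` vertices is uncolourable, then removing any at most `r₁ + r₂ - 1` vertices
of `G` leaves an uncolourable graph, i.e. `ρ(G) ≥ r₁ + r₂`. -/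
theorem resistance_additive {V : Type*} [Fintype V] (G : SimpleGraph V)
    (hG : IsCubic G) (V1 V2 : Set V) (hdisj : Disjoint V1 V2)
    (r1 r2 : ℕ) (hr1 : 0 < r1) (hr2 : 0 < r2)
    (h1 : ∀ S : Set V, S ⊆ V1 → S.ncard ≤ r1 - 1 →
      ¬ ThreeEdgeColorable (poleOf G (V1 \ S)))
    (h2 : ∀ S : Set V, S ⊆ V2 → S.ncard ≤ r2 - 1 →
      ¬ ThreeEdgeColorable (poleOf G (V2 \ S))) :
    ∀ S : Set V, S.ncard ≤ r1 + r2 - 1 → ¬ ThreeEdgeColorable (G.induce Sᶜ) := by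
  intro S hS hcol
  have key : (S ∩ V1).ncard ≤ r1 - 1 ∨ (S ∩ V2).ncard ≤ r2 - 1 := by
    by_contra h
    push_neg at h
    obtain ⟨ha, hb⟩ := h
    have hd : Disjoint (S ∩ V1) (S ∩ V2) :=
      hdisj.mono Set.inter_subset_right Set.inter_subset_right
    have hu : ((S ∩ V1) ∪ (S ∩ V2)).ncard = (S ∩ V1).ncard + (S ∩ V2).ncard :=
      Set.ncard_union_eq hd (Set.toFinite _) (Set.toFinite _)
    have hsub : (S ∩ V1) ∪ (S ∩ V2) ⊆ S :=
      Set.union_subset Set.inter_subset_left Set.inter_subset_left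
    have hle := Set.ncard_le_ncard hsub (Set.toFinite _)
    omega
  rcases key with hk | hk
  · refine h1 (S ∩ V1) Set.inter_subset_right hk ?_
    refine pole_colorable G hG S _ ?_ hcol
    intro x hx hxS
    exact hx.2 ⟨hxS, hx.1⟩
  · refine h2 (S ∩ V2) Set.inter_subset_right hk ?_
    refine pole_colorable G hG S _ ?_ hcol
    intro x hx hxS
    exact hx.2 ⟨hxS, hx.1⟩
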